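/- Let K ⊆ ℝ^d be a compact set. Suppose that for every x ∈ K there exists C_x > 0 such that for all f ∈ C¹(K) and all y ∈ K with y ≠ x one has |f(y) − f(x)|/|y − x| ≤ C_x ‖f‖_{C¹(K)}. Then: if (f_n) and (df_n) are sequences with each df_n a continuous derivative of f_n on K, f_n → f uniformly on K and df_n → g uniformly on K, then g is a continuous derivative of f on K (i.e., the jet space J¹(K) with norm ‖f‖_K + ‖df‖_K is complete). -/

import Mathlib

/-!
Fix `x ∈ K` and `ε > 0`. Since `(fₙ, dfₙ)` is uniformly Cauchy, the `C¹(K)`-norm of `fₘ - fₙ` is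
small for large `m, n`, so the pointwise bound at `x` makes `fₘ - fₙ` uniformly Lipschitz at `x`
with a small constant. Letting `m → ∞`, the same holds for `f - fₙ`. The difference quotient of `f`
against `g x` is then the difference quotient of `fₙ` against `dfₙ x`, which tends to `0`, up to
two small errors: the Lipschitz quotient of `f - fₙ` at `x` and `‖dfₙ x - g x‖`.
-/

open Set Filter Topology MeasureTheory
open scoped NNReal ENNReal

noncomputable section

/-- `df` is a (not necessarily unique) derivative of `f` on the set `K`:
at every `x ∈ K`, `(f y - f x - ⟪df x, y - x⟫)/‖y - x‖ → 0` as `y → x` within `K`. -/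
def IsDerivOn {d : ℕ} (K : Set (EuclideanSpace ℝ (Fin d)))
    (f : EuclideanSpace ℝ (Fin d) → ℝ)
    (df : EuclideanSpace ℝ (Fin d) → EuclideanSpace ℝ (Fin d)) : Prop :=
  ∀ x ∈ K, Filter.Tendsto
    (fun y => (f y - f x - (inner ℝ (df x) (y - x) : ℝ)) / ‖y - x‖)
    (𝓝[K \ {x}] x) (𝓝 0)

/-- Sup norm of a function on `K`. -/
def supNormOn {d : ℕ} {α : Type*} [Norm α] (K : Set (EuclideanSpace ℝ (Fin d)))
    (g : EuclideanSpace ℝ (Fin d) → α) : ℝ :=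
  sSup ((fun z => ‖g z‖) '' K)

/-- `f ∈ C¹(K)`: `f` admits a continuous derivative on `K`. -/
def MemC1 {d : ℕ} (K : Set (EuclideanSpace ℝ (Fin d)))
    (f : EuclideanSpace ℝ (Fin d) → ℝ) : Prop :=
  ∃ df, ContinuousOn df K ∧ IsDerivOn K f df

/-- The quotient norm `‖f‖_{C¹(K)} = ‖f‖_K + inf {‖df‖_K : df a continuous derivative of f}`. -/
def c1Norm {d : ℕ} (K : Set (EuclideanSpace ℝ (Fin d)))
    (f : EuclideanSpace ℝ (Fin d) → ℝ) : ℝ :=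
  supNormOn K f +
    sInf {r | ∃ df, ContinuousOn df K ∧ IsDerivOn K f df ∧ r = supNormOn K df}

section JetSpace

variable {d : ℕ} {K : Set (EuclideanSpace ℝ (Fin d))}

lemma supNormOn_nonneg {α : Type*} [SeminormedAddGroup α] (g : EuclideanSpace ℝ (Fin d) → α) :
    0 ≤ supNormOn K g :=
  Real.sSup_nonneg <| by rintro _ ⟨z, -, rfl⟩; exact norm_nonneg _

lemma supNormOn_le {α : Type*} [SeminormedAddGroup α] {g : EuclideanSpace ℝ (Fin d) → α} {M : ℝ}
    (hM : 0 ≤ M) (h : ∀ z ∈ K, ‖g z‖ ≤ M) : supNormOn K g ≤ M :=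
  Real.sSup_le (by rintro _ ⟨z, hz, rfl⟩; exact h z hz) hM

lemma UniformCauchySeqOn.exists_forall_supNormOn_sub_le {α : Type*} [SeminormedAddCommGroup α]
    {F : ℕ → EuclideanSpace ℝ (Fin d) → α} (hF : UniformCauchySeqOn F atTop K) {ε : ℝ}
    (hε : 0 < ε) : ∃ N, ∀ m ≥ N, ∀ n ≥ N, supNormOn K (fun z => F m z - F n z) ≤ ε := by
  obtain ⟨N, hN⟩ := Metric.uniformCauchySeqOn_iff.1 hF ε hε
  exact ⟨N, fun m hm n hn => supNormOn_le hε.le fun z hz => by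
    rw [← dist_eq_norm]; exact (hN m hm n hn z hz).le⟩

lemma IsDerivOn.sub {f g : EuclideanSpace ℝ (Fin d) → ℝ}
    {df dg : EuclideanSpace ℝ (Fin d) → EuclideanSpace ℝ (Fin d)}
    (hf : IsDerivOn K f df) (hg : IsDerivOn K g dg) :
    IsDerivOn K (fun z => f z - g z) (fun z => df z - dg z) := by
  intro x hx
  simpa [← sub_div, inner_sub_left, sub_sub_sub_comm] using (hf x hx).sub (hg x hx)

lemma c1Norm_le_of_isDerivOn {f : EuclideanSpace ℝ (Fin d) → ℝ}
    {df : EuclideanSpace ℝ (Fin d) → EuclideanSpace ℝ (Fin d)}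
    (hc : ContinuousOn df K) (hd : IsDerivOn K f df) :
    c1Norm K f ≤ supNormOn K f + supNormOn K df := by
  have hbdd : BddBelow {r | ∃ df, ContinuousOn df K ∧ IsDerivOn K f df ∧ r = supNormOn K df} :=
    ⟨0, by rintro _ ⟨_, -, -, rfl⟩; exact supNormOn_nonneg _⟩
  exact add_le_add_right (csInf_le hbdd ⟨df, hc, hd, rfl⟩) _

lemma exists_forall_c1Norm_sub_le {f : ℕ → EuclideanSpace ℝ (Fin d) → ℝ}
    {df : ℕ → EuclideanSpace ℝ (Fin d) → EuclideanSpace ℝ (Fin d)}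
    {flim : EuclideanSpace ℝ (Fin d) → ℝ} {glim : EuclideanSpace ℝ (Fin d) → EuclideanSpace ℝ (Fin d)}
    (hder : ∀ n, ContinuousOn (df n) K ∧ IsDerivOn K (f n) (df n))
    (hfu : TendstoUniformlyOn f flim atTop K) (hgu : TendstoUniformlyOn df glim atTop K)
    {ε : ℝ} (hε : 0 < ε) :
    ∃ N, ∀ m ≥ N, ∀ n ≥ N, c1Norm K (fun z => f m z - f n z) ≤ ε := by
  obtain ⟨N₁, hN₁⟩ := hfu.uniformCauchySeqOn.exists_forall_supNormOn_sub_le (half_pos hε)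
  obtain ⟨N₂, hN₂⟩ := hgu.uniformCauchySeqOn.exists_forall_supNormOn_sub_le (half_pos hε)
  refine ⟨max N₁ N₂, fun m hm n hn => ?_⟩
  rw [ge_iff_le, max_le_iff] at hm hn
  calc c1Norm K (fun z => f m z - f n z)
      ≤ supNormOn K (fun z => f m z - f n z) + supNormOn K (fun z => df m z - df n z) :=
        c1Norm_le_of_isDerivOn ((hder m).1.sub (hder n).1) ((hder m).2.sub (hder n).2)
    _ ≤ ε / 2 + ε / 2 := add_le_add (hN₁ m hm.1 n hn.1) (hN₂ m hm.2 n hn.2)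
    _ = ε := add_halves ε

end JetSpace

lemma eventually_abs_diffQuot_lt {E : Type*} [NormedAddCommGroup E] [InnerProductSpace ℝ E]
    {s : Set E} {x v w : E} {f F : E → ℝ} {a b c : ℝ}
    (hf : Tendsto (fun y => (f y - f x - inner ℝ v (y - x)) / ‖y - x‖) (𝓝[s \ {x}] x) (𝓝 0))
    (hF : ∀ y ∈ s, |F y - f y - (F x - f x)| ≤ a * ‖y - x‖) (hw : ‖w - v‖ ≤ b) (hc : 0 < c) :
    ∀ᶠ y in 𝓝[s \ {x}] x, |(F y - F x - inner ℝ w (y - x)) / ‖y - x‖| < a + b + c := by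
  filter_upwards [Metric.tendsto_nhds.1 hf c hc, self_mem_nhdsWithin] with y hfy ⟨hys, hyx⟩
  have hpos : 0 < ‖y - x‖ := norm_pos_iff.2 (sub_ne_zero.2 hyx)
  rw [Real.dist_eq, sub_zero, abs_div, abs_of_pos hpos, div_lt_iff₀ hpos] at hfy
  rw [abs_div, abs_of_pos hpos, div_lt_iff₀ hpos]
  have hinner : |inner ℝ (w - v) (y - x)| ≤ b * ‖y - x‖ :=
    (abs_real_inner_le_norm _ _).trans (by gcongr)
  have hsplit : F y - F x - inner ℝ w (y - x) =
      (F y - f y - (F x - f x)) + (f y - f x - inner ℝ v (y - x)) - inner ℝ (w - v) (y - x) := by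
    rw [inner_sub_left]; ring
  calc |F y - F x - inner ℝ w (y - x)|
      ≤ |F y - f y - (F x - f x)| + |f y - f x - inner ℝ v (y - x)|
        + |inner ℝ (w - v) (y - x)| := by
        rw [hsplit]; exact (abs_sub _ _).trans (by gcongr; exact abs_add_le _ _)
    _ < (a + b + c) * ‖y - x‖ := by linarith [hF y hys]

theorem jet_space_complete_of_pointwise_bound_general {d : ℕ}
    (K : Set (EuclideanSpace ℝ (Fin d)))
    (hbd : ∀ x ∈ K, ∃ C > (0:ℝ), ∀ f : EuclideanSpace ℝ (Fin d) → ℝ,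
      MemC1 K f → ∀ y ∈ K, y ≠ x → |f y - f x| ≤ C * c1Norm K f * ‖y - x‖)
    (f : ℕ → EuclideanSpace ℝ (Fin d) → ℝ)
    (df : ℕ → EuclideanSpace ℝ (Fin d) → EuclideanSpace ℝ (Fin d))
    (hder : ∀ n, ContinuousOn (df n) K ∧ IsDerivOn K (f n) (df n))
    (flim : EuclideanSpace ℝ (Fin d) → ℝ)
    (glim : EuclideanSpace ℝ (Fin d) → EuclideanSpace ℝ (Fin d))
    (hfu : TendstoUniformlyOn f flim Filter.atTop K)
    (hgu : TendstoUniformlyOn df glim Filter.atTop K) :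
    ContinuousOn glim K ∧ IsDerivOn K flim glim := by
  refine ⟨hgu.continuousOn (Frequently.of_forall fun n => (hder n).1), fun x hx => ?_⟩
  obtain ⟨C, hC, hCx⟩ := hbd x hx
  refine Metric.tendsto_nhds.2 fun ε hε => ?_
  have hη : 0 < ε / (C + 2) := by positivity
  obtain ⟨N, hN⟩ := exists_forall_c1Norm_sub_le hder hfu hgu hη
  obtain ⟨n, hnx, hnN⟩ := ((hgu.tendsto_at hx).eventually
    (Metric.closedBall_mem_nhds _ hη)).and (eventually_ge_atTop N) |>.exists
  have hlip : ∀ y ∈ K, |flim y - f n y - (flim x - f n x)| ≤ C * (ε / (C + 2)) * ‖y - x‖ := by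
    intro y hy
    rcases eq_or_ne y x with rfl | hyx
    · simp
    refine le_of_tendsto (((hfu.tendsto_at hy).sub_const _).sub
      ((hfu.tendsto_at hx).sub_const _)).abs ?_
    filter_upwards [eventually_ge_atTop N] with m hm
    calc |f m y - f n y - (f m x - f n x)|
        ≤ C * c1Norm K (fun z => f m z - f n z) * ‖y - x‖ :=
          hCx _ ⟨_, (hder m).1.sub (hder n).1, (hder m).2.sub (hder n).2⟩ y hy hyx
      _ ≤ C * (ε / (C + 2)) * ‖y - x‖ := by gcongr; exact hN m hm n hnN
  have hgx : ‖glim x - df n x‖ ≤ ε / (C + 2) := by rwa [← dist_eq_norm, dist_comm]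
  filter_upwards [eventually_abs_diffQuot_lt ((hder n).2 x hx) hlip hgx hη] with y hy
  rw [Real.dist_eq, sub_zero]
  convert hy using 1
  field_simp
  ring

/-- If for every `x ∈ K` there is `C_x > 0` with
`|f y - f x| / ‖y - x‖ ≤ C_x ‖f‖_{C¹(K)}` for all `f ∈ C¹(K)` and `y ∈ K, y ≠ x`,
then the jet space `J¹(K)` is complete: uniform limits of jets are jets. -/
theorem jet_space_complete_of_pointwise_bound {d : ℕ}
    (K : Set (EuclideanSpace ℝ (Fin d))) (hK : IsCompact K)
    (hbd : ∀ x ∈ K, ∃ C > (0:ℝ), ∀ f : EuclideanSpace ℝ (Fin d) → ℝ,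
      MemC1 K f → ∀ y ∈ K, y ≠ x → |f y - f x| ≤ C * c1Norm K f * ‖y - x‖)
    (f : ℕ → EuclideanSpace ℝ (Fin d) → ℝ)
    (df : ℕ → EuclideanSpace ℝ (Fin d) → EuclideanSpace ℝ (Fin d))
    (hder : ∀ n, ContinuousOn (df n) K ∧ IsDerivOn K (f n) (df n))
    (flim : EuclideanSpace ℝ (Fin d) → ℝ)
    (glim : EuclideanSpace ℝ (Fin d) → EuclideanSpace ℝ (Fin d))
    (hfu : TendstoUniformlyOn f flim Filter.atTop K)
    (hgu : TendstoUniformlyOn df glim Filter.atTop K) :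
    ContinuousOn glim K ∧ IsDerivOn K flim glim :=
  jet_space_complete_of_pointwise_bound_general K hbd f df hder flim glim hfu hgu
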